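/- arXiv:2103.01447 — 2 statements merged into one kernel-verified Lean document; each statement's English description precedes it below -/
import Mathlib

section
/- Fix x, x' ∈ ℝ^d, v' ∈ ℝ^d, y_1, …, y_n ∈ ℝ^d, λ ∈ ℝ, 1 ≤ b ≤ n, η > 0, β > 0 and constants γ ≥ 0, α ≥ 0. For a size-b subset I ⊆ {1,…,n}, let v(I) be the ZeroSARAH gradient estimator, x⁺(I) := x − η v(I), and y_j⁺(I) := ∇f_j(x) if j ∈ I, y_j⁺(I) := y_j otherwise. Then, with f* any lower bound of f, E_I[ f(x⁺(I)) − f* + (γ − η/2)‖v(I) − ∇f(x)‖² + (1/(2η) − L/2)‖x⁺(I) − x‖² + α·(1/n)∑_{j=1}^n ‖∇f_j(x) − y_j⁺(I)‖² ] ≤ f(x) − f* − (η/2)‖∇f(x)‖² + γ(1−λ)²‖v' − ∇f(x')‖² + (2γL²/b + α(1 − b/n)(1 + 1/β)L²)‖x − x'‖² + (2γλ²/b + α(1 − b/n)(1 + β))·(1/n)∑_{j=1}^n ‖∇f_j(x') − y_j‖². -/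
/-!
Pointwise in `I`, the descent lemma for the `L`-smooth average `f` bounds
`f(x⁺) + (1/(2η) - L/2)‖x⁺ - x‖²` by `f(x) - (η/2)‖∇f(x)‖² + (η/2)‖v - ∇f(x)‖²`, so only two
second moments under sampling without replacement remain. A uniform `b`-subset contains a fixed
index with probability `b/n` and a fixed pair of indices with a probability that does not depend on
the pair; hence `E‖∑_{i∈I} uᵢ‖² ≤ (b/n) ∑ ‖uᵢ‖²` whenever `∑ uᵢ = 0`. Now `v(I) - ∇f(x)` is the
centred minibatch mean of `wᵢ = ∇fᵢ(x) - ∇fᵢ(x') + λ(∇fᵢ(x') - yᵢ)` plus the constant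
`(1 - λ)(v' - ∇f(x'))`, which gives the `γ` terms; each table entry `yⱼ` is refreshed with
probability `b/n`, and Young's inequality with parameter `β` gives the `α` terms.
-/

noncomputable section

/-- The average function `f = (1/n) ∑ᵢ fᵢ`. -/
noncomputable def avgF {d n : ℕ} (f : Fin n → EuclideanSpace ℝ (Fin d) → ℝ) :
    EuclideanSpace ℝ (Fin d) → ℝ :=
  fun z => (n : ℝ)⁻¹ * ∑ i, f i z

/-- Expectation (average) of a real-valued function of a uniformly random
size-`b` subset of `{1,…,n}`. -/
noncomputable def expSub (n b : ℕ) (g : Finset (Fin n) → ℝ) : ℝ :=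
  (∑ I ∈ Finset.powersetCard b (Finset.univ : Finset (Fin n)), g I) /
    ((Finset.powersetCard b (Finset.univ : Finset (Fin n))).card : ℝ)

/-- The ZeroSARAH gradient estimator. -/
noncomputable def zsEst {d n : ℕ} (f : Fin n → EuclideanSpace ℝ (Fin d) → ℝ)
    (x x' v' : EuclideanSpace ℝ (Fin d)) (y : Fin n → EuclideanSpace ℝ (Fin d))
    (lam : ℝ) (b : ℕ) (I : Finset (Fin n)) : EuclideanSpace ℝ (Fin d) :=
  (b : ℝ)⁻¹ • ∑ i ∈ I, (gradient (f i) x - gradient (f i) x')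
    + (1 - lam) • v'
    + lam • ((b : ℝ)⁻¹ • ∑ i ∈ I, (gradient (f i) x' - y i)
        + (n : ℝ)⁻¹ • ∑ j, y j)

open Finset RealInnerProductSpace

section Descent

variable {E : Type*} [NormedAddCommGroup E] [InnerProductSpace ℝ E] [CompleteSpace E]
  {φ : E → ℝ} {L : ℝ}

theorem hasDerivAt_apply_add_smul (hφ : Differentiable ℝ φ) (x v : E) (t : ℝ) :
    HasDerivAt (fun s : ℝ => φ (x + s • v)) ⟪gradient φ (x + t • v), v⟫ t := by
  have hline : HasDerivAt (fun s : ℝ => x + s • v) v t := by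
    simpa using ((hasDerivAt_id t).smul_const v).const_add x
  exact (hφ _).hasGradientAt.hasFDerivAt.comp_hasDerivAt t hline

theorem apply_add_le_of_lipschitz_gradient (hφ : Differentiable ℝ φ)
    (hL : ∀ z w, ‖gradient φ z - gradient φ w‖ ≤ L * ‖z - w‖) (x v : E) :
    φ (x + v) ≤ φ x + ⟪gradient φ x, v⟫ + L / 2 * ‖v‖ ^ 2 := by
  have hbound : ∀ t ∈ Set.Ico (0 : ℝ) 1,
      ⟪gradient φ (x + t • v), v⟫ ≤ ⟪gradient φ x, v⟫ + L * t * ‖v‖ ^ 2 := by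
    intro t ht
    have hlip : ‖gradient φ (x + t • v) - gradient φ x‖ ≤ L * (t * ‖v‖) := by
      simpa [norm_smul, abs_of_nonneg ht.1] using hL (x + t • v) x
    calc ⟪gradient φ (x + t • v), v⟫
        = ⟪gradient φ x, v⟫ + ⟪gradient φ (x + t • v) - gradient φ x, v⟫ := by
          rw [inner_sub_left]; ring
      _ ≤ ⟪gradient φ x, v⟫ + ‖gradient φ (x + t • v) - gradient φ x‖ * ‖v‖ := by
          gcongr; exact real_inner_le_norm _ _
      _ ≤ ⟪gradient φ x, v⟫ + L * (t * ‖v‖) * ‖v‖ := by gcongr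
      _ = ⟪gradient φ x, v⟫ + L * t * ‖v‖ ^ 2 := by ring
  have hB : ∀ t : ℝ, HasDerivAt (fun s => φ x + s * ⟪gradient φ x, v⟫ + L / 2 * s ^ 2 * ‖v‖ ^ 2)
      (⟪gradient φ x, v⟫ + L * t * ‖v‖ ^ 2) t := by
    intro t
    exact (((hasDerivAt_mul_const _).const_add (φ x)).fun_add
      (((hasDerivAt_pow 2 t).const_mul (L / 2)).mul_const (‖v‖ ^ 2))).congr_deriv
      (by push_cast; ring)
  have key := image_le_of_deriv_right_le_deriv_boundary
    (fun t _ => (hasDerivAt_apply_add_smul hφ x v t).continuousAt.continuousWithinAt)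
    (fun t _ => (hasDerivAt_apply_add_smul hφ x v t).hasDerivWithinAt)
    (by simp) (fun t _ => (hB t).continuousAt.continuousWithinAt)
    (fun t _ => (hB t).hasDerivWithinAt) hbound (Set.right_mem_Icc.2 zero_le_one)
  simpa using key

theorem apply_sub_smul_le_of_lipschitz_gradient (hφ : Differentiable ℝ φ)
    (hL : ∀ z w, ‖gradient φ z - gradient φ w‖ ≤ L * ‖z - w‖) (x v : E) (η : ℝ) :
    φ (x - η • v) + (1 / (2 * η) - L / 2) * ‖(x - η • v) - x‖ ^ 2
      ≤ φ x - η / 2 * ‖gradient φ x‖ ^ 2 + η / 2 * ‖v - gradient φ x‖ ^ 2 := by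
  have hdesc := apply_add_le_of_lipschitz_gradient hφ hL x (-(η • v))
  rw [← sub_eq_add_neg, inner_neg_right, real_inner_smul_right, norm_neg, norm_smul,
    Real.norm_eq_abs, mul_pow, sq_abs] at hdesc
  rw [sub_sub_cancel_left, norm_neg, norm_smul, Real.norm_eq_abs, mul_pow, sq_abs,
    norm_sub_sq_real, real_inner_comm]
  -- also true at `η = 0`, where both sides vanish because `1 / 0 = 0`
  have hη : 1 / (2 * η) * η ^ 2 = η / 2 := by
    rcases eq_or_ne η 0 with rfl | hη
    · simp
    · field_simp
  linear_combination hdesc + ‖v‖ ^ 2 * hη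

end Descent

theorem norm_add_sq_le_one_add_inv_mul_add {E : Type*} [SeminormedAddGroup E] (a c : E) {β : ℝ}
    (hβ : 0 < β) : ‖a + c‖ ^ 2 ≤ (1 + 1 / β) * ‖a‖ ^ 2 + (1 + β) * ‖c‖ ^ 2 := by
  have hgap : (1 + 1 / β) * ‖a‖ ^ 2 + (1 + β) * ‖c‖ ^ 2 - (‖a‖ + ‖c‖) ^ 2
      = (‖a‖ - β * ‖c‖) ^ 2 / β := by
    field_simp; ring
  have : 0 ≤ (‖a‖ - β * ‖c‖) ^ 2 / β := by positivity
  nlinarith [pow_le_pow_left₀ (norm_nonneg _) (norm_add_le a c) 2]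

theorem sum_norm_sub_mean_sq_le {ι E : Type*} [Fintype ι] [NormedAddCommGroup E]
    [InnerProductSpace ℝ E] (w : ι → E) :
    ∑ i, ‖w i - (Fintype.card ι : ℝ)⁻¹ • ∑ j, w j‖ ^ 2 ≤ ∑ i, ‖w i‖ ^ 2 := by
  set m := (Fintype.card ι : ℝ)⁻¹ • ∑ j, w j
  have hsum : ∑ i, ⟪w i, m⟫ = Fintype.card ι * ‖m‖ ^ 2 := by
    rcases isEmpty_or_nonempty ι with hι | hι
    · simp
    · rw [← sum_inner, ← real_inner_self_eq_norm_sq, ← real_inner_smul_left, smul_smul,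
        mul_inv_cancel₀ (by positivity), one_smul]
  simp only [norm_sub_sq_real, sum_add_distrib, sum_sub_distrib, ← mul_sum, hsum, sum_const,
    card_univ, nsmul_eq_mul]
  nlinarith [sq_nonneg ‖m‖, (Nat.cast_nonneg (Fintype.card ι) : (0 : ℝ) ≤ _)]

section Sampling

variable {α : Type*} [Fintype α] [DecidableEq α]

theorem sum_sum_mem_eq_sum_card_smul {M : Type*} [AddCommMonoid M] (B : Finset (Finset α))
    (F : α → M) : ∑ I ∈ B, ∑ i ∈ I, F i = ∑ i, #{I ∈ B | i ∈ I} • F i := by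
  rw [sum_comm' (t' := univ) (s' := fun i => {I ∈ B | i ∈ I}) (by simp)]
  simp only [sum_const]

theorem sum_norm_sq_sum_mem {E : Type*} [NormedAddCommGroup E] [InnerProductSpace ℝ E]
    (B : Finset (Finset α)) (u : α → E) :
    ∑ I ∈ B, ‖∑ i ∈ I, u i‖ ^ 2 = ∑ i, ∑ j, (#{I ∈ B | i ∈ I ∧ j ∈ I} : ℝ) * ⟪u i, u j⟫ := by
  simp_rw [← real_inner_self_eq_norm_sq, sum_inner, inner_sum]
  rw [sum_comm' (t' := univ) (s' := fun i => {I ∈ B | i ∈ I}) (by simp)]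
  refine sum_congr rfl fun i _ => ?_
  rw [sum_sum_mem_eq_sum_card_smul]
  simp only [filter_filter, nsmul_eq_mul]

theorem card_filter_mem_powersetCard {b : ℕ} (hb : 1 ≤ b) (i : α) :
    #{I ∈ powersetCard b univ | i ∈ I} = (Fintype.card α - 1).choose (b - 1) := by
  simpa using card_filter_powersetCard_subset {i} univ b (subset_univ _) (by simpa using hb)

theorem card_mul_choose_eq_card_powersetCard_mul {b : ℕ} (hb : 1 ≤ b) :
    Fintype.card α * (Fintype.card α - 1).choose (b - 1)
      = #(powersetCard b (univ : Finset α)) * b := by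
  rw [← sum_card (card_filter_mem_powersetCard hb),
    sum_const_nat fun I hI => (mem_powersetCard.1 hI).2]

theorem exists_card_filter_mem_mem_powersetCard_eq (b : ℕ) :
    ∃ M : ℕ, ∀ i j : α, i ≠ j → #{I ∈ powersetCard b univ | i ∈ I ∧ j ∈ I} = M := by
  rcases le_or_gt 2 b with hb | hb
  · refine ⟨(Fintype.card α - 2).choose (b - 2), fun i j hij => ?_⟩
    simpa [insert_subset_iff, card_pair hij] using
      card_filter_powersetCard_subset {i, j} univ b (subset_univ _) (by simpa [card_pair hij])
  · refine ⟨0, fun i j hij => card_eq_zero.2 (filter_eq_empty_iff.2 fun I hI hijI => hij ?_)⟩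
    exact card_le_one.1 (by rw [(mem_powersetCard.1 hI).2]; omega) _ hijI.1 _ hijI.2

theorem sum_powersetCard_norm_sq_sum_le {E : Type*} [NormedAddCommGroup E] [InnerProductSpace ℝ E]
    {b : ℕ} (hb : 1 ≤ b) (u : α → E) (hu : ∑ i, u i = 0) :
    ∑ I ∈ powersetCard b univ, ‖∑ i ∈ I, u i‖ ^ 2
      ≤ (Fintype.card α - 1).choose (b - 1) * ∑ i, ‖u i‖ ^ 2 := by
  obtain ⟨M, hM⟩ := exists_card_filter_mem_mem_powersetCard_eq (α := α) b
  set C := (Fintype.card α - 1).choose (b - 1)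
  have hcount : ∀ i j : α, (#{I ∈ powersetCard b univ | i ∈ I ∧ j ∈ I} : ℝ)
      = M + if i = j then (C - M : ℝ) else 0 := by
    intro i j
    split_ifs with hij
    · subst hij; simp [card_filter_mem_powersetCard hb, C]
    · simp [hM i j hij]
  have hoff : ∑ i, ∑ j, (M : ℝ) * ⟪u i, u j⟫ = 0 := by
    simp_rw [← mul_sum, ← inner_sum, ← sum_inner, hu, inner_zero_left, mul_zero]
  rw [sum_norm_sq_sum_mem]
  simp_rw [hcount, add_mul, sum_add_distrib, hoff, ite_mul, zero_mul, sum_ite_eq, mem_univ,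
    if_true, real_inner_self_eq_norm_sq, ← mul_sum, zero_add]
  have : (0 : ℝ) ≤ M * ∑ i, ‖u i‖ ^ 2 := by positivity
  linarith

end Sampling

section Expectation

variable {n b : ℕ}

theorem expSub_le_expSub {g h : Finset (Fin n) → ℝ}
    (hgh : ∀ I : Finset (Fin n), #I = b → g I ≤ h I) :
    expSub n b g ≤ expSub n b h :=
  div_le_div_of_nonneg_right (sum_le_sum fun I hI => hgh I (mem_powersetCard.1 hI).2)
    (Nat.cast_nonneg _)

theorem expSub_congr {g h : Finset (Fin n) → ℝ}
    (hgh : ∀ I : Finset (Fin n), #I = b → g I = h I) :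
    expSub n b g = expSub n b h :=
  (expSub_le_expSub fun I hI => (hgh I hI).le).antisymm
    (expSub_le_expSub fun I hI => (hgh I hI).ge)

theorem expSub_add (g h : Finset (Fin n) → ℝ) :
    expSub n b (fun I => g I + h I) = expSub n b g + expSub n b h := by
  simp only [expSub, sum_add_distrib, add_div]

theorem expSub_const_mul (c : ℝ) (g : Finset (Fin n) → ℝ) :
    expSub n b (fun I => c * g I) = c * expSub n b g := by
  simp only [expSub, ← mul_sum, mul_div_assoc]

theorem card_powersetCard_univ_ne_zero (hbn : b ≤ n) :
    (#(powersetCard b (univ : Finset (Fin n))) : ℝ) ≠ 0 := by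
  simp [(Nat.choose_pos hbn).ne']

theorem expSub_const (hbn : b ≤ n) (c : ℝ) : expSub n b (fun _ => c) = c := by
  have := card_powersetCard_univ_ne_zero hbn
  simp only [expSub, sum_const, nsmul_eq_mul]
  field_simp

theorem choose_pred_div_card_powersetCard (hb : 1 ≤ b) (hbn : b ≤ n) :
    ((n - 1).choose (b - 1) : ℝ) / #(powersetCard b (univ : Finset (Fin n))) = b / n := by
  have hn : (n : ℝ) ≠ 0 := by norm_cast; omega
  have h := card_mul_choose_eq_card_powersetCard_mul (α := Fin n) hb
  rw [Fintype.card_fin] at h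
  rw [div_eq_div_iff (card_powersetCard_univ_ne_zero hbn) hn]
  exact_mod_cast (mul_comm _ _).trans (h.trans (mul_comm _ _))

theorem expSub_sum_mem (hb : 1 ≤ b) (hbn : b ≤ n) (F : Fin n → ℝ) :
    expSub n b (fun I => ∑ i ∈ I, F i) = b / n * ∑ i, F i := by
  simp only [expSub, sum_sum_mem_eq_sum_card_smul, card_filter_mem_powersetCard hb,
    Fintype.card_fin, nsmul_eq_mul, ← mul_sum]
  rw [mul_div_right_comm, choose_pred_div_card_powersetCard hb hbn]

theorem expSub_norm_sq_sum_le {E : Type*} [NormedAddCommGroup E] [InnerProductSpace ℝ E]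
    (hb : 1 ≤ b) (hbn : b ≤ n) (u : Fin n → E) (hu : ∑ i, u i = 0) :
    expSub n b (fun I => ‖∑ i ∈ I, u i‖ ^ 2) ≤ b / n * ∑ i, ‖u i‖ ^ 2 := by
  have h := sum_powersetCard_norm_sq_sum_le hb u hu
  rw [Fintype.card_fin] at h
  rw [expSub, ← choose_pred_div_card_powersetCard hb hbn, div_mul_eq_mul_div]
  exact div_le_div_of_nonneg_right h (Nat.cast_nonneg _)

theorem expSub_norm_sq_minibatch_sub_mean_add_le {E : Type*} [NormedAddCommGroup E]
    [InnerProductSpace ℝ E] (hb : 1 ≤ b) (hbn : b ≤ n) (w : Fin n → E) (Z : E) :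
    expSub n b (fun I => ‖((b : ℝ)⁻¹ • ∑ i ∈ I, w i - (n : ℝ)⁻¹ • ∑ i, w i) + Z‖ ^ 2)
      ≤ ‖Z‖ ^ 2 + (b : ℝ)⁻¹ * ((n : ℝ)⁻¹ * ∑ i, ‖w i‖ ^ 2) := by
  have hb0 : (b : ℝ) ≠ 0 := by norm_cast; omega
  have hn0 : (n : ℝ) ≠ 0 := by norm_cast; omega
  set m := (n : ℝ)⁻¹ • ∑ i, w i
  set u := fun i => w i - m
  have hu : ∑ i, u i = 0 := by
    simp [u, m, sum_sub_distrib, ← Nat.cast_smul_eq_nsmul ℝ, smul_smul, mul_inv_cancel₀ hn0]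
  have hcenter : ∀ I : Finset (Fin n), #I = b →
      (b : ℝ)⁻¹ • ∑ i ∈ I, w i - m = (b : ℝ)⁻¹ • ∑ i ∈ I, u i := by
    intro I hI
    simp [u, sum_sub_distrib, hI, smul_sub, ← Nat.cast_smul_eq_nsmul ℝ, smul_smul,
      inv_mul_cancel₀ hb0]
  calc expSub n b (fun I => ‖((b : ℝ)⁻¹ • ∑ i ∈ I, w i - m) + Z‖ ^ 2)
      = expSub n b (fun I => (b : ℝ)⁻¹ ^ 2 * ‖∑ i ∈ I, u i‖ ^ 2
          + (2 * (b : ℝ)⁻¹ * ∑ i ∈ I, ⟪u i, Z⟫ + ‖Z‖ ^ 2)) := expSub_congr fun I hI => by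
        rw [hcenter I hI, norm_add_sq_real, norm_smul, real_inner_smul_left, sum_inner,
          Real.norm_eq_abs, abs_inv, Nat.abs_cast]
        ring
    _ = (b : ℝ)⁻¹ ^ 2 * expSub n b (fun I => ‖∑ i ∈ I, u i‖ ^ 2) + ‖Z‖ ^ 2 := by
        rw [expSub_add, expSub_add, expSub_const_mul, expSub_const_mul, expSub_sum_mem hb hbn,
          ← sum_inner, hu, inner_zero_left, expSub_const hbn]
        ring
    _ ≤ (b : ℝ)⁻¹ ^ 2 * (b / n * ∑ i, ‖w i‖ ^ 2) + ‖Z‖ ^ 2 := by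
        gcongr
        calc _ ≤ b / n * ∑ i, ‖u i‖ ^ 2 := expSub_norm_sq_sum_le hb hbn u hu
          _ ≤ b / n * ∑ i, ‖w i‖ ^ 2 := by
            gcongr ?_ * ?_
            simpa using sum_norm_sub_mean_sq_le w
    _ = ‖Z‖ ^ 2 + (b : ℝ)⁻¹ * ((n : ℝ)⁻¹ * ∑ i, ‖w i‖ ^ 2) := by
        field_simp
        ring

theorem expSub_sum_ite_mem (hb : 1 ≤ b) (hbn : b ≤ n) (F : Fin n → ℝ) :
    expSub n b (fun I => ∑ j, if j ∈ I then 0 else F j) = (1 - b / n) * ∑ j, F j := by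
  have hsplit : ∀ I : Finset (Fin n),
      ∑ j, (if j ∈ I then 0 else F j) = ∑ j, F j + (-1) * ∑ j ∈ I, F j := by
    intro I
    have h := sum_ite_mem univ I F
    rw [univ_inter] at h
    rw [← h, mul_sum, ← sum_add_distrib]
    exact sum_congr rfl fun j _ => by split_ifs <;> ring
  simp_rw [hsplit]
  rw [expSub_add, expSub_const hbn, expSub_const_mul, expSub_sum_mem hb hbn]
  ring

theorem expSub_mean_norm_sq_sub_ite_mem {E : Type*} [NormedAddCommGroup E] (hb : 1 ≤ b)
    (hbn : b ≤ n) (a y : Fin n → E) :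
    expSub n b (fun I => (n : ℝ)⁻¹ * ∑ j, ‖a j - (if j ∈ I then a j else y j)‖ ^ 2)
      = (1 - b / n) * ((n : ℝ)⁻¹ * ∑ j, ‖a j - y j‖ ^ 2) := by
  have h : ∀ (I : Finset (Fin n)) j, ‖a j - (if j ∈ I then a j else y j)‖ ^ 2
      = if j ∈ I then 0 else ‖a j - y j‖ ^ 2 := by
    intro I j
    split_ifs <;> simp
  simp_rw [h]
  rw [expSub_const_mul, expSub_sum_ite_mem hb hbn]
  ring

end Expectation

section ZeroSARAH

variable {d n : ℕ} {f : Fin n → EuclideanSpace ℝ (Fin d) → ℝ}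

theorem hasGradientAt_avgF {z : EuclideanSpace ℝ (Fin d)}
    (hf : ∀ i, DifferentiableAt ℝ (f i) z) :
    HasGradientAt (avgF f) ((n : ℝ)⁻¹ • ∑ i, gradient (f i) z) z := by
  rw [hasGradientAt_iff_hasFDerivAt, map_smul, map_sum]
  exact (HasFDerivAt.fun_sum fun i _ => (hf i).hasGradientAt).const_mul _

theorem differentiable_avgF (hf : ∀ i, Differentiable ℝ (f i)) : Differentiable ℝ (avgF f) :=
  fun z => (hasGradientAt_avgF fun i => hf i z).differentiableAt

theorem gradient_avgF (hf : ∀ i, Differentiable ℝ (f i)) (z : EuclideanSpace ℝ (Fin d)) :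
    gradient (avgF f) z = (n : ℝ)⁻¹ • ∑ i, gradient (f i) z :=
  (hasGradientAt_avgF fun i => hf i z).gradient

theorem norm_gradient_avgF_sub_le (hn : n ≠ 0) (hf : ∀ i, Differentiable ℝ (f i)) {L : ℝ}
    (hL : ∀ i z w, ‖gradient (f i) z - gradient (f i) w‖ ≤ L * ‖z - w‖)
    (z w : EuclideanSpace ℝ (Fin d)) :
    ‖gradient (avgF f) z - gradient (avgF f) w‖ ≤ L * ‖z - w‖ := by
  rw [gradient_avgF hf, gradient_avgF hf, ← smul_sub, ← sum_sub_distrib, norm_smul,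
    norm_inv, Real.norm_natCast]
  calc (n : ℝ)⁻¹ * ‖∑ i, (gradient (f i) z - gradient (f i) w)‖
      ≤ (n : ℝ)⁻¹ * ∑ _i : Fin n, L * ‖z - w‖ := by
        gcongr
        exact (norm_sum_le _ _).trans (sum_le_sum fun i _ => hL i z w)
    _ = L * ‖z - w‖ := by
        rw [sum_const, card_univ, Fintype.card_fin, nsmul_eq_mul, inv_mul_cancel_left₀]
        exact_mod_cast hn

theorem zsEst_sub_gradient_avgF (hf : ∀ i, Differentiable ℝ (f i))
    (x x' v' : EuclideanSpace ℝ (Fin d)) (y : Fin n → EuclideanSpace ℝ (Fin d)) (lam : ℝ)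
    (b : ℕ) (I : Finset (Fin n)) :
    zsEst f x x' v' y lam b I - gradient (avgF f) x
      = ((b : ℝ)⁻¹ • ∑ i ∈ I, (gradient (f i) x - gradient (f i) x'
            + lam • (gradient (f i) x' - y i))
          - (n : ℝ)⁻¹ • ∑ i, (gradient (f i) x - gradient (f i) x'
            + lam • (gradient (f i) x' - y i)))
        + (1 - lam) • (v' - gradient (avgF f) x') := by
  simp only [zsEst, gradient_avgF hf, sum_add_distrib, sum_sub_distrib, ← smul_sum]
  module

theorem mean_norm_sq_gradient_sub_le (hn : n ≠ 0) {L β : ℝ} (hβ : 0 < β)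
    (hL : ∀ i z w, ‖gradient (f i) z - gradient (f i) w‖ ≤ L * ‖z - w‖)
    (x x' : EuclideanSpace ℝ (Fin d)) (y : Fin n → EuclideanSpace ℝ (Fin d)) :
    (n : ℝ)⁻¹ * ∑ j, ‖gradient (f j) x - y j‖ ^ 2
      ≤ (1 + 1 / β) * L ^ 2 * ‖x - x'‖ ^ 2
        + (1 + β) * ((n : ℝ)⁻¹ * ∑ j, ‖gradient (f j) x' - y j‖ ^ 2) := by
  have hj : ∀ j, ‖gradient (f j) x - y j‖ ^ 2
      ≤ (1 + 1 / β) * L ^ 2 * ‖x - x'‖ ^ 2 + (1 + β) * ‖gradient (f j) x' - y j‖ ^ 2 := by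
    intro j
    have hlip := pow_le_pow_left₀ (norm_nonneg _) (hL j x x') 2
    have hyoung := norm_add_sq_le_one_add_inv_mul_add
      (gradient (f j) x - gradient (f j) x') (gradient (f j) x' - y j) hβ
    rw [sub_add_sub_cancel] at hyoung
    have : 0 ≤ 1 + 1 / β := by positivity
    nlinarith
  calc (n : ℝ)⁻¹ * ∑ j, ‖gradient (f j) x - y j‖ ^ 2
      ≤ (n : ℝ)⁻¹ * ∑ j, ((1 + 1 / β) * L ^ 2 * ‖x - x'‖ ^ 2
          + (1 + β) * ‖gradient (f j) x' - y j‖ ^ 2) := by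
        gcongr with j
        exact hj j
    _ = _ := by
        have : (n : ℝ) ≠ 0 := by exact_mod_cast hn
        rw [sum_add_distrib, sum_const, card_univ, Fintype.card_fin, nsmul_eq_mul, ← mul_sum]
        field_simp

theorem expSub_mean_norm_sq_gradient_sub_ite_mem_le {b : ℕ} (hb : 1 ≤ b) (hbn : b ≤ n) {L β : ℝ}
    (hβ : 0 < β) (hL : ∀ i z w, ‖gradient (f i) z - gradient (f i) w‖ ≤ L * ‖z - w‖)
    (x x' : EuclideanSpace ℝ (Fin d)) (y : Fin n → EuclideanSpace ℝ (Fin d)) :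
    expSub n b (fun I => (n : ℝ)⁻¹ *
        ∑ j, ‖gradient (f j) x - (if j ∈ I then gradient (f j) x else y j)‖ ^ 2)
      ≤ (1 - b / n) * ((1 + 1 / β) * L ^ 2 * ‖x - x'‖ ^ 2
        + (1 + β) * ((n : ℝ)⁻¹ * ∑ j, ‖gradient (f j) x' - y j‖ ^ 2)) := by
  rw [expSub_mean_norm_sq_sub_ite_mem hb hbn]
  have hbn' : (b : ℝ) / n ≤ 1 := div_le_one_of_le₀ (by exact_mod_cast hbn) (Nat.cast_nonneg n)
  exact mul_le_mul_of_nonneg_left (mean_norm_sq_gradient_sub_le (by omega) hβ hL x x' y)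
    (sub_nonneg.2 hbn')

theorem expSub_norm_sq_zsEst_sub_gradient_avgF_le {b : ℕ} (hb : 1 ≤ b) (hbn : b ≤ n)
    (hf : ∀ i, Differentiable ℝ (f i)) {L : ℝ}
    (hL : ∀ i z w, ‖gradient (f i) z - gradient (f i) w‖ ≤ L * ‖z - w‖)
    (x x' v' : EuclideanSpace ℝ (Fin d)) (y : Fin n → EuclideanSpace ℝ (Fin d)) (lam : ℝ) :
    expSub n b (fun I => ‖zsEst f x x' v' y lam b I - gradient (avgF f) x‖ ^ 2)
      ≤ (1 - lam) ^ 2 * ‖v' - gradient (avgF f) x'‖ ^ 2 + 2 * L ^ 2 / b * ‖x - x'‖ ^ 2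
        + 2 * lam ^ 2 / b * ((n : ℝ)⁻¹ * ∑ j, ‖gradient (f j) x' - y j‖ ^ 2) := by
  have hw : ∀ i, ‖gradient (f i) x - gradient (f i) x' + lam • (gradient (f i) x' - y i)‖ ^ 2
      ≤ 2 * L ^ 2 * ‖x - x'‖ ^ 2 + 2 * lam ^ 2 * ‖gradient (f i) x' - y i‖ ^ 2 := by
    intro i
    have hlip := pow_le_pow_left₀ (norm_nonneg _) (hL i x x') 2
    have hyoung := norm_add_sq_le_one_add_inv_mul_add
      (gradient (f i) x - gradient (f i) x') (lam • (gradient (f i) x' - y i)) one_pos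
    rw [norm_smul, mul_pow, Real.norm_eq_abs, sq_abs] at hyoung
    nlinarith
  simp_rw [zsEst_sub_gradient_avgF hf]
  refine (expSub_norm_sq_minibatch_sub_mean_add_le hb hbn _ _).trans ?_
  have hn : (n : ℝ) ≠ 0 := by norm_cast; omega
  calc _ ≤ ‖(1 - lam) • (v' - gradient (avgF f) x')‖ ^ 2 + (b : ℝ)⁻¹ * ((n : ℝ)⁻¹
          * ∑ i, (2 * L ^ 2 * ‖x - x'‖ ^ 2 + 2 * lam ^ 2 * ‖gradient (f i) x' - y i‖ ^ 2)) := by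
        gcongr with i
        exact hw i
    _ = _ := by
        rw [norm_smul, mul_pow, Real.norm_eq_abs, sq_abs, sum_add_distrib, sum_const, card_univ,
          Fintype.card_fin, nsmul_eq_mul, ← mul_sum]
        field_simp
        ring

end ZeroSARAH

theorem zerosarah_one_step_recursion_general {d n : ℕ}
    (L : ℝ)
    (f : Fin n → EuclideanSpace ℝ (Fin d) → ℝ)
    (hdiff : ∀ i, Differentiable ℝ (f i))
    (hsmooth : ∀ i (x y : EuclideanSpace ℝ (Fin d)),
      ‖gradient (f i) x - gradient (f i) y‖ ≤ L * ‖x - y‖)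
    (x x' v' : EuclideanSpace ℝ (Fin d)) (y : Fin n → EuclideanSpace ℝ (Fin d))
    (lam : ℝ) (b : ℕ) (hb1 : 1 ≤ b) (hbn : b ≤ n)
    (η : ℝ) (β : ℝ) (hβ : 0 < β)
    (γ α : ℝ) (hγ : 0 ≤ γ) (hα : 0 ≤ α)
    (fstar : ℝ) :
    expSub n b (fun I =>
        avgF f (x - η • zsEst f x x' v' y lam b I) - fstar
        + (γ - η / 2) * ‖zsEst f x x' v' y lam b I - gradient (avgF f) x‖ ^ 2
        + (1 / (2 * η) - L / 2) * ‖(x - η • zsEst f x x' v' y lam b I) - x‖ ^ 2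
        + α * ((n : ℝ)⁻¹ *
            ∑ j, ‖gradient (f j) x - (if j ∈ I then gradient (f j) x else y j)‖ ^ 2))
      ≤ avgF f x - fstar - η / 2 * ‖gradient (avgF f) x‖ ^ 2
        + γ * (1 - lam) ^ 2 * ‖v' - gradient (avgF f) x'‖ ^ 2
        + (2 * γ * L ^ 2 / (b : ℝ)
            + α * (1 - (b : ℝ) / n) * (1 + 1 / β) * L ^ 2) * ‖x - x'‖ ^ 2
        + (2 * γ * lam ^ 2 / (b : ℝ)
            + α * (1 - (b : ℝ) / n) * (1 + β)) *
            ((n : ℝ)⁻¹ * ∑ j, ‖gradient (f j) x' - y j‖ ^ 2) := by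
  have hdescent := fun I => apply_sub_smul_le_of_lipschitz_gradient (differentiable_avgF hdiff)
    (norm_gradient_avgF_sub_le (by omega) hdiff hsmooth) x (zsEst f x x' v' y lam b I) η
  calc _ ≤ expSub n b (fun I => (avgF f x - fstar - η / 2 * ‖gradient (avgF f) x‖ ^ 2)
          + γ * ‖zsEst f x x' v' y lam b I - gradient (avgF f) x‖ ^ 2
          + α * ((n : ℝ)⁻¹ *
            ∑ j, ‖gradient (f j) x - (if j ∈ I then gradient (f j) x else y j)‖ ^ 2)) :=
        expSub_le_expSub fun I _ => by linarith [hdescent I]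
    _ ≤ _ := by
        rw [expSub_add, expSub_add, expSub_const hbn, expSub_const_mul, expSub_const_mul]
        linear_combination
          γ * expSub_norm_sq_zsEst_sub_gradient_avgF_le hb1 hbn hdiff hsmooth x x' v' y lam
          + α * expSub_mean_norm_sq_gradient_sub_ite_mem_le hb1 hbn hβ hsmooth x x' y

/-- One-step Lyapunov (potential) inequality for ZeroSARAH. -/
theorem zerosarah_one_step_recursion {d n : ℕ} (hd : 1 ≤ d) (hn : 1 ≤ n)
    (L : ℝ) (hL : 0 < L)
    (f : Fin n → EuclideanSpace ℝ (Fin d) → ℝ)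
    (hdiff : ∀ i, Differentiable ℝ (f i))
    (hsmooth : ∀ i (x y : EuclideanSpace ℝ (Fin d)),
      ‖gradient (f i) x - gradient (f i) y‖ ≤ L * ‖x - y‖)
    (x x' v' : EuclideanSpace ℝ (Fin d)) (y : Fin n → EuclideanSpace ℝ (Fin d))
    (lam : ℝ) (b : ℕ) (hb1 : 1 ≤ b) (hbn : b ≤ n)
    (η : ℝ) (hη : 0 < η) (β : ℝ) (hβ : 0 < β)
    (γ α : ℝ) (hγ : 0 ≤ γ) (hα : 0 ≤ α)
    (fstar : ℝ) (hfstar : ∀ z, fstar ≤ avgF f z) :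
    expSub n b (fun I =>
        avgF f (x - η • zsEst f x x' v' y lam b I) - fstar
        + (γ - η / 2) * ‖zsEst f x x' v' y lam b I - gradient (avgF f) x‖ ^ 2
        + (1 / (2 * η) - L / 2) * ‖(x - η • zsEst f x x' v' y lam b I) - x‖ ^ 2
        + α * ((n : ℝ)⁻¹ *
            ∑ j, ‖gradient (f j) x - (if j ∈ I then gradient (f j) x else y j)‖ ^ 2))
      ≤ avgF f x - fstar - η / 2 * ‖gradient (avgF f) x‖ ^ 2
        + γ * (1 - lam) ^ 2 * ‖v' - gradient (avgF f) x'‖ ^ 2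
        + (2 * γ * L ^ 2 / (b : ℝ)
            + α * (1 - (b : ℝ) / n) * (1 + 1 / β) * L ^ 2) * ‖x - x'‖ ^ 2
        + (2 * γ * lam ^ 2 / (b : ℝ)
            + α * (1 - (b : ℝ) / n) * (1 + β)) *
            ((n : ℝ)⁻¹ * ∑ j, ‖gradient (f j) x' - y j‖ ^ 2) :=
  zerosarah_one_step_recursion_general L f hdiff hsmooth x x' v' y lam b hb1 hbn η β hβ γ α hγ hα
    fstar
end
end

section
/- (Tracking-error recursion for D-ZeroSARAH.) Fix x, x' ∈ ℝ^d, vectors y_{i,j} ∈ ℝ^d (1 ≤ i ≤ n, 1 ≤ j ≤ m), 1 ≤ s ≤ n, 1 ≤ b ≤ m and β > 0. For (S,{I_i}), define y_{i,j}⁺ := ∇f_{i,j}(x) if i ∈ S and j ∈ I_i, and y_{i,j}⁺ := y_{i,j} otherwise. Then E_{S,{I_i}}[(1/(nm)) ∑_{i,j} ‖∇f_{i,j}(x) − y_{i,j}⁺‖²] ≤ (1 − sb/(nm))(1 + β) · (1/(nm)) ∑_{i,j} ‖∇f_{i,j}(x') − y_{i,j}‖² + (1 − sb/(nm))(1 +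 1/β) · L² ‖x − x'‖². -/
noncomputable section

/-- The global average function `f(x) = (1/(nm)) ∑ᵢ∑ⱼ f_{i,j}(x)`. -/
noncomputable def dAvgF {d n m : ℕ}
    (f : Fin n → Fin m → EuclideanSpace ℝ (Fin d) → ℝ) :
    EuclideanSpace ℝ (Fin d) → ℝ :=
  fun z => ((n : ℝ) * (m : ℝ))⁻¹ * ∑ i, ∑ j, f i j z

/-- Expectation over a uniformly random size-`s` subset `S ⊆ {1,…,n}` together with,
independently for each client, a uniformly random size-`b` subset of `{1,…,m}`
(real-valued functional). -/
noncomputable def dExp (n m s b : ℕ)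
    (g : Finset (Fin n) → (Fin n → Finset (Fin m)) → ℝ) : ℝ :=
  (∑ S ∈ Finset.powersetCard s (Finset.univ : Finset (Fin n)),
    ∑ σ ∈ Finset.univ.filter
      (fun σ : Fin n → Finset (Fin m) => ∀ i, (σ i).card = b), g S σ) /
  (((Finset.powersetCard s (Finset.univ : Finset (Fin n))).card : ℝ) *
    ((Finset.univ.filter
      (fun σ : Fin n → Finset (Fin m) => ∀ i, (σ i).card = b)).card : ℝ))

/-- The D-ZeroSARAH gradient estimator. -/
noncomputable def dEst {d n m : ℕ}
    (f : Fin n → Fin m → EuclideanSpace ℝ (Fin d) → ℝ)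
    (x x' v' : EuclideanSpace ℝ (Fin d))
    (y : Fin n → Fin m → EuclideanSpace ℝ (Fin d))
    (lam : ℝ) (s b : ℕ)
    (S : Finset (Fin n)) (σ : Fin n → Finset (Fin m)) : EuclideanSpace ℝ (Fin d) :=
  ((s : ℝ) * (b : ℝ))⁻¹ •
      ∑ i ∈ S, ∑ j ∈ σ i, (gradient (f i j) x - gradient (f i j) x')
    + (1 - lam) • v'
    + lam • (((s : ℝ) * (b : ℝ))⁻¹ •
          ∑ i ∈ S, ∑ j ∈ σ i, (gradient (f i j) x' - y i j)
        + ((n : ℝ) * (m : ℝ))⁻¹ • ∑ i, ∑ j, y i j)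

/-! Client `i` is sampled with probability `s/n` and, independently, component `j` of its
batch with probability `b/m`, so the pair `(i, j)` is refreshed with probability `sb/(nm)`.
A refreshed pair has zero error and every other pair keeps its error, hence the expected mean
error is exactly `(1 - sb/(nm))` times the mean of `‖∇f_{ij}(x) - y_{ij}‖²`. Splitting
`∇f_{ij}(x) - y_{ij} = (∇f_{ij}(x') - y_{ij}) + (∇f_{ij}(x) - ∇f_{ij}(x'))` and applying
Young's inequality `‖u + v‖² ≤ (1 + β)‖u‖² + (1 + 1/β)‖v‖²` together with `L`-smoothness
bounds that mean. -/

open Finset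

lemma card_filter_mem_powersetCard_mul_card {α : Type*} [Fintype α] [DecidableEq α]
    (a : α) (k : ℕ) :
    #{S ∈ powersetCard k (univ : Finset α) | a ∈ S} * Fintype.card α
      = k * (Fintype.card α).choose k := by
  rcases k with _ | k
  · simp
  obtain ⟨N, hN⟩ : ∃ N, Fintype.card α = N + 1 :=
    Nat.exists_eq_succ_of_ne_zero (Fintype.card_pos_iff.2 ⟨a⟩).ne'
  have hcount := card_filter_powersetCard_subset {a} univ (k + 1) (subset_univ _) (by simp)
  simp only [singleton_subset_iff, card_singleton, card_univ, add_tsub_cancel_right, hN]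
    at hcount
  rw [hcount, hN, mul_comm, Nat.add_one_mul_choose_eq, mul_comm]

lemma card_filter_piFinset_const_apply {ι κ : Type*} [Fintype ι] [DecidableEq ι]
    [DecidableEq κ] (s : Finset κ) (i : ι) (p : κ → Prop) [DecidablePred p] :
    #{f ∈ Fintype.piFinset fun _ : ι ↦ s | p (f i)}
      = #{x ∈ s | p x} * #s ^ (Fintype.card ι - 1) := by
  have hfilter : {f ∈ Fintype.piFinset (fun _ : ι ↦ s) | p (f i)}
      = Fintype.piFinset (Function.update (fun _ ↦ s) i {x ∈ s | p x}) := by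
    rw [Fintype.piFinset_update_eq_filter_piFinset_mem _ _ (filter_subset _ _)]
    ext f
    simp +contextual [Fintype.mem_piFinset]
  rw [hfilter, Fintype.card_piFinset,
    prod_congr rfl fun j _ ↦ Function.apply_update (fun _ ↦ Finset.card) _ i _ j,
    prod_update_of_mem (mem_univ i), prod_const,
    card_sdiff_of_subset (subset_univ _), card_singleton, card_univ]

lemma sum_sum_boole_mem_and_mem {α ι κ : Type*} [DecidableEq α] [DecidableEq κ]
    (P : Finset (Finset α)) (F : Finset (ι → Finset κ)) (a : α) (i : ι) (k : κ) :
    ∑ S ∈ P, ∑ σ ∈ F, (if a ∈ S ∧ k ∈ σ i then (1 : ℝ) else 0)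
      = #{S ∈ P | a ∈ S} * #{σ ∈ F | k ∈ σ i} := by
  have hsplit : ∀ (S : Finset α) (σ : ι → Finset κ), (if a ∈ S ∧ k ∈ σ i then (1 : ℝ) else 0)
      = (if a ∈ S then 1 else 0) * (if k ∈ σ i then 1 else 0) := fun _ _ ↦ by
    rw [ite_zero_mul_ite_zero, one_mul]
  simp only [hsplit, ← sum_mul_sum, sum_boole]

lemma filter_forall_card_eq_eq_piFinset_powersetCard (n m b : ℕ) :
    univ.filter (fun σ : Fin n → Finset (Fin m) ↦ ∀ i, (σ i).card = b)
      = Fintype.piFinset fun _ ↦ powersetCard b univ := by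
  ext σ
  simp [Fintype.mem_piFinset]

section Sampling

variable {n m s b : ℕ}

lemma dExp_mul_left (c : ℝ) (g : Finset (Fin n) → (Fin n → Finset (Fin m)) → ℝ) :
    dExp n m s b (fun S σ ↦ c * g S σ) = c * dExp n m s b g := by
  simp only [dExp, ← mul_sum, mul_div_assoc]

lemma dExp_sub (g h : Finset (Fin n) → (Fin n → Finset (Fin m)) → ℝ) :
    dExp n m s b (fun S σ ↦ g S σ - h S σ) = dExp n m s b g - dExp n m s b h := by
  simp only [dExp, sum_sub_distrib, sub_div]

lemma dExp_sum {ι : Type*} (t : Finset ι)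
    (g : ι → Finset (Fin n) → (Fin n → Finset (Fin m)) → ℝ) :
    dExp n m s b (fun S σ ↦ ∑ k ∈ t, g k S σ) = ∑ k ∈ t, dExp n m s b (g k) := by
  simp only [dExp, ← sum_div]
  congr 1
  calc _ = ∑ S ∈ powersetCard s univ, ∑ k ∈ t, ∑ σ ∈ univ.filter
        (fun σ : Fin n → Finset (Fin m) ↦ ∀ i, (σ i).card = b), g k S σ :=
        sum_congr rfl fun _ _ ↦ sum_comm
    _ = _ := sum_comm

lemma dExp_const (hsn : s ≤ n) (hbm : b ≤ m) (c : ℝ) :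
    dExp n m s b (fun _ _ ↦ c) = c := by
  have hS : (#(powersetCard s (univ : Finset (Fin n))) : ℝ) ≠ 0 := by
    simpa using Nat.choose_pos hsn |>.ne'
  have hσ : (#(univ.filter fun σ : Fin n → Finset (Fin m) ↦ ∀ i, (σ i).card = b) : ℝ) ≠ 0 := by
    simp [filter_forall_card_eq_eq_piFinset_powersetCard, (Nat.choose_pos hbm).ne']
  simp only [dExp, sum_const, nsmul_eq_mul]
  field_simp

lemma dExp_mem_and_mem (hsn : s ≤ n) (hbm : b ≤ m) (i : Fin n) (j : Fin m) :
    dExp n m s b (fun S σ ↦ if i ∈ S ∧ j ∈ σ i then 1 else 0)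
      = (s : ℝ) * b / (n * m) := by
  have hS := card_filter_mem_powersetCard_mul_card i s
  have hσ := card_filter_mem_powersetCard_mul_card j b
  have hpiσ := card_filter_piFinset_const_apply (ι := Fin n) (powersetCard b univ) i (j ∈ ·)
  simp only [Fintype.card_fin, card_powersetCard, card_univ] at hS hσ hpiσ
  have hS' : (#{S ∈ powersetCard s univ | i ∈ S} : ℝ) * n = s * n.choose s := by
    exact_mod_cast hS
  have hσ' : (#{T ∈ powersetCard b univ | j ∈ T} : ℝ) * m = b * m.choose b := by
    exact_mod_cast hσ
  have hpow : (m.choose b : ℝ) ^ n = m.choose b * (m.choose b : ℝ) ^ (n - 1) := by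
    rw [← pow_succ', Nat.sub_add_cancel i.pos]
  have hsn' := (Nat.choose_pos hsn).ne'
  have hbm' := (Nat.choose_pos hbm).ne'
  have hn := i.pos.ne'
  have hm := j.pos.ne'
  rw [dExp, filter_forall_card_eq_eq_piFinset_powersetCard, sum_sum_boole_mem_and_mem, hpiσ]
  simp only [card_powersetCard, card_univ, Fintype.card_fin, Fintype.card_piFinset, prod_const]
  push_cast
  rw [hpow, div_eq_div_iff (by positivity) (by positivity)]
  linear_combination
    ((#{T ∈ powersetCard b univ | j ∈ T} : ℝ) * m * (m.choose b : ℝ) ^ (n - 1)) * hS'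
    + (s * n.choose s * (m.choose b : ℝ) ^ (n - 1)) * hσ'

end Sampling

lemma dExp_mean_sq_norm_sub_resample {E : Type*} [SeminormedAddCommGroup E]
    {n m s b : ℕ} (hsn : s ≤ n) (hbm : b ≤ m) (w z : Fin n → Fin m → E) :
    dExp n m s b (fun S σ ↦ ((n : ℝ) * m)⁻¹ *
        ∑ i, ∑ j, ‖w i j - (if i ∈ S ∧ j ∈ σ i then w i j else z i j)‖ ^ 2)
      = (1 - (s : ℝ) * b / (n * m)) * (((n : ℝ) * m)⁻¹ * ∑ i, ∑ j, ‖w i j - z i j‖ ^ 2) := by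
  have hresample : ∀ (S : Finset (Fin n)) (σ : Fin n → Finset (Fin m)) i j,
      ‖w i j - (if i ∈ S ∧ j ∈ σ i then w i j else z i j)‖ ^ 2
        = ‖w i j - z i j‖ ^ 2 * (1 - if i ∈ S ∧ j ∈ σ i then 1 else 0) := fun S σ i j ↦ by
    split_ifs <;> simp
  simp only [hresample, dExp_mul_left, dExp_sum, dExp_sub, dExp_const hsn hbm,
    dExp_mem_and_mem hsn hbm, ← sum_mul]
  ring

lemma norm_add_sq_le_of_pos {E : Type*} [SeminormedAddCommGroup E] (u v : E) {β : ℝ}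
    (hβ : 0 < β) : ‖u + v‖ ^ 2 ≤ (1 + β) * ‖u‖ ^ 2 + (1 + 1 / β) * ‖v‖ ^ 2 := by
  have hyoung : 2 * ‖u‖ * ‖v‖ ≤ β * ‖u‖ ^ 2 + 1 / β * ‖v‖ ^ 2 := by
    have := sq_nonneg (β * ‖u‖ - ‖v‖)
    field_simp
    nlinarith
  nlinarith [norm_add_le u v, norm_nonneg (u + v), norm_nonneg u, norm_nonneg v]

lemma norm_sub_sq_le_of_norm_sub_le {E : Type*} [SeminormedAddCommGroup E] {a a' : E} {r : ℝ}
    (h : ‖a - a'‖ ≤ r) (c : E) {β : ℝ} (hβ : 0 < β) :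
    ‖a - c‖ ^ 2 ≤ (1 + β) * ‖a' - c‖ ^ 2 + (1 + 1 / β) * r ^ 2 :=
  calc ‖a - c‖ ^ 2 = ‖(a' - c) + (a - a')‖ ^ 2 := by rw [sub_add_sub_cancel']
    _ ≤ (1 + β) * ‖a' - c‖ ^ 2 + (1 + 1 / β) * ‖a - a'‖ ^ 2 := norm_add_sq_le_of_pos _ _ hβ
    _ ≤ (1 + β) * ‖a' - c‖ ^ 2 + (1 + 1 / β) * r ^ 2 := by gcongr

lemma mean_add_const_le {ι κ : Type*} [Fintype ι] [Fintype κ] (a : ι → κ → ℝ) {c : ℝ}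
    (hc : 0 ≤ c) :
    ((Fintype.card ι : ℝ) * Fintype.card κ)⁻¹ * ∑ i, ∑ j, (a i j + c)
      ≤ ((Fintype.card ι : ℝ) * Fintype.card κ)⁻¹ * ∑ i, ∑ j, a i j + c := by
  simp only [sum_add_distrib, sum_const, card_univ, nsmul_eq_mul, mul_add]
  rcases eq_or_ne ((Fintype.card ι : ℝ) * Fintype.card κ) 0 with h | h
  · simp [← mul_assoc, h, hc]
  · rw [← mul_assoc (Fintype.card ι : ℝ), inv_mul_cancel_left₀ h]

theorem dzerosarah_tracking_bound_general {d n m : ℕ}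
    (L : ℝ)
    (f : Fin n → Fin m → EuclideanSpace ℝ (Fin d) → ℝ)
    (hsmooth : ∀ i j (x y : EuclideanSpace ℝ (Fin d)),
      ‖gradient (f i j) x - gradient (f i j) y‖ ≤ L * ‖x - y‖)
    (x x' : EuclideanSpace ℝ (Fin d))
    (y : Fin n → Fin m → EuclideanSpace ℝ (Fin d))
    (s b : ℕ) (hsn : s ≤ n) (hbm : b ≤ m)
    (β : ℝ) (hβ : 0 < β) :
    dExp n m s b (fun S σ => ((n : ℝ) * (m : ℝ))⁻¹ *
        ∑ i, ∑ j, ‖gradient (f i j) x -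
          (if i ∈ S ∧ j ∈ σ i then gradient (f i j) x else y i j)‖ ^ 2)
      ≤ (1 - (s : ℝ) * (b : ℝ) / ((n : ℝ) * (m : ℝ))) * (1 + β) *
          (((n : ℝ) * (m : ℝ))⁻¹ * ∑ i, ∑ j, ‖gradient (f i j) x' - y i j‖ ^ 2)
        + (1 - (s : ℝ) * (b : ℝ) / ((n : ℝ) * (m : ℝ))) * (1 + 1 / β) * L ^ 2
            * ‖x - x'‖ ^ 2 := by
  rw [dExp_mean_sq_norm_sub_resample hsn hbm]
  have hsample : 0 ≤ 1 - (s : ℝ) * b / (n * m) := by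
    rw [sub_nonneg]
    exact div_le_one_of_le₀ (by gcongr) (by positivity)
  have hterm : ∀ i j, ‖gradient (f i j) x - y i j‖ ^ 2
      ≤ (1 + β) * ‖gradient (f i j) x' - y i j‖ ^ 2 + (1 + 1 / β) * L ^ 2 * ‖x - x'‖ ^ 2 :=
    fun i j ↦ by
      simpa [mul_pow, mul_assoc] using norm_sub_sq_le_of_norm_sub_le (hsmooth i j x x') (y i j) hβ
  have hmean := mean_add_const_le (fun i j ↦ (1 + β) * ‖gradient (f i j) x' - y i j‖ ^ 2)
    (c := (1 + 1 / β) * L ^ 2 * ‖x - x'‖ ^ 2) (by positivity)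
  simp only [Fintype.card_fin, ← mul_sum] at hmean
  calc (1 - (s : ℝ) * b / (n * m)) * (((n : ℝ) * m)⁻¹ * ∑ i, ∑ j, ‖gradient (f i j) x - y i j‖ ^ 2)
      ≤ (1 - (s : ℝ) * b / (n * m)) * (((n : ℝ) * m)⁻¹ * ∑ i, ∑ j,
          ((1 + β) * ‖gradient (f i j) x' - y i j‖ ^ 2 + (1 + 1 / β) * L ^ 2 * ‖x - x'‖ ^ 2)) := by
        gcongr with i _ j _
        exact hterm i j
    _ ≤ (1 - (s : ℝ) * b / (n * m)) * (((n : ℝ) * m)⁻¹ * ((1 + β) * ∑ i, ∑ j,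
          ‖gradient (f i j) x' - y i j‖ ^ 2) + (1 + 1 / β) * L ^ 2 * ‖x - x'‖ ^ 2) :=
        mul_le_mul_of_nonneg_left hmean hsample
    _ = _ := by ring

/-- Tracking-error recursion for D-ZeroSARAH. -/
theorem dzerosarah_tracking_bound {d n m : ℕ} (hd : 1 ≤ d) (hn : 1 ≤ n) (hm : 1 ≤ m)
    (L : ℝ) (hL : 0 < L)
    (f : Fin n → Fin m → EuclideanSpace ℝ (Fin d) → ℝ)
    (hdiff : ∀ i j, Differentiable ℝ (f i j))
    (hsmooth : ∀ i j (x y : EuclideanSpace ℝ (Fin d)),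
      ‖gradient (f i j) x - gradient (f i j) y‖ ≤ L * ‖x - y‖)
    (x x' : EuclideanSpace ℝ (Fin d))
    (y : Fin n → Fin m → EuclideanSpace ℝ (Fin d))
    (s b : ℕ) (hs1 : 1 ≤ s) (hsn : s ≤ n) (hb1 : 1 ≤ b) (hbm : b ≤ m)
    (β : ℝ) (hβ : 0 < β) :
    dExp n m s b (fun S σ => ((n : ℝ) * (m : ℝ))⁻¹ *
        ∑ i, ∑ j, ‖gradient (f i j) x -
          (if i ∈ S ∧ j ∈ σ i then gradient (f i j) x else y i j)‖ ^ 2)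
      ≤ (1 - (s : ℝ) * (b : ℝ) / ((n : ℝ) * (m : ℝ))) * (1 + β) *
          (((n : ℝ) * (m : ℝ))⁻¹ * ∑ i, ∑ j, ‖gradient (f i j) x' - y i j‖ ^ 2)
        + (1 - (s : ℝ) * (b : ℝ) / ((n : ℝ) * (m : ℝ))) * (1 + 1 / β) * L ^ 2
            * ‖x - x'‖ ^ 2 :=
  dzerosarah_tracking_bound_general L f hsmooth x x' y s b hsn hbm β hβ
end
end
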